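/- arXiv:1301.4771 — 7 statements merged into one kernel-verified Lean document; each statement's English description precedes it below -/
import Mathlib

section
/- The quadratic polynomial ₂F₁(-2,b;c;z) has two real simple zeros if and only if one of the following holds: (i) c < -1 and c < b < 0; (ii) -1 < c < 0 and (b > 0 or b < c); (iii) c > 0 and (b < 0 or b > c). -/
lemma quad_iff (A B : ℝ) (hA : A ≠ 0) :
    (∃ z₁ z₂ : ℝ, z₁ ≠ z₂ ∧ 1 + B * z₁ + A * z₁ ^ 2 = 0 ∧ 1 + B * z₂ + A * z₂ ^ 2 = 0) ↔
      B ^ 2 - 4 * A > 0 := by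
  constructor
  · rintro ⟨z₁, z₂, hne, h1, h2⟩
    have hd : z₁ - z₂ ≠ 0 := sub_ne_zero.mpr hne
    have hB : B = -A * (z₁ + z₂) := by
      have h3 : (B + A * (z₁ + z₂)) * (z₁ - z₂) = 0 := by linear_combination h1 - h2
      rcases mul_eq_zero.mp h3 with h | h
      · linarith
      · exact absurd h hd
    have hP : 1 = A * (z₁ * z₂) := by
      rw [hB] at h1
      linear_combination h1
    have hkey : B ^ 2 - 4 * A = (A * (z₁ - z₂)) ^ 2 := by
      linear_combination (B - A * (z₁ + z₂)) * hB - 4 * A * hP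
    rw [hkey]
    positivity
  · intro h
    set s := Real.sqrt (B ^ 2 - 4 * A) with hs
    have hss : s * s = B ^ 2 - 4 * A := Real.mul_self_sqrt h.le
    have hs2 : discrim A B 1 = s * s := by rw [discrim, hss]; ring
    have hspos : 0 < s := Real.sqrt_pos.mpr h
    have h2A : (2 * A) ≠ 0 := by simpa using hA
    refine ⟨(-B + s) / (2 * A), (-B - s) / (2 * A), ?_, ?_, ?_⟩
    · intro heq
      rw [div_eq_div_iff h2A h2A] at heq
      have hz : s * (4 * A) = 0 := by linear_combination heq
      rcases mul_eq_zero.mp hz with h' | h'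
      · exact absurd h' hspos.ne'
      · exact hA (by linarith)
    · have := (quadratic_eq_zero_iff hA hs2 ((-B + s) / (2 * A))).mpr (Or.inl rfl)
      linarith [this]
    · have := (quadratic_eq_zero_iff hA hs2 ((-B - s) / (2 * A))).mpr (Or.inr rfl)
      linarith [this]

theorem stmt_2 (b c : ℝ) (hb0 : b ≠ 0) (hb1 : b ≠ -1) (hc0 : c ≠ 0) (hc1 : c ≠ -1) :
    (∃ z₁ z₂ : ℝ, z₁ ≠ z₂ ∧
        1 - 2 * b / c * z₁ + b * (b + 1) / (c * (c + 1)) * z₁ ^ 2 = 0 ∧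
        1 - 2 * b / c * z₂ + b * (b + 1) / (c * (c + 1)) * z₂ ^ 2 = 0) ↔
      ((c < -1 ∧ c < b ∧ b < 0) ∨
       (-1 < c ∧ c < 0 ∧ (b > 0 ∨ b < c)) ∨
       (c > 0 ∧ (b < 0 ∨ b > c))) := by
  have hb1' : b + 1 ≠ 0 := fun h => hb1 (by linarith)
  have hc1' : c + 1 ≠ 0 := fun h => hc1 (by linarith)
  have hA : b * (b + 1) / (c * (c + 1)) ≠ 0 :=
    div_ne_zero (mul_ne_zero hb0 hb1') (mul_ne_zero hc0 hc1')
  have key := quad_iff (b * (b + 1) / (c * (c + 1))) (-(2 * b / c)) hA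
  have heq : ∀ z : ℝ, 1 - 2 * b / c * z + b * (b + 1) / (c * (c + 1)) * z ^ 2 =
      1 + (-(2 * b / c)) * z + b * (b + 1) / (c * (c + 1)) * z ^ 2 := fun z => by ring
  simp only [heq]
  rw [key]
  have hden : (0:ℝ) < c ^ 2 * (c + 1) ^ 2 := by positivity
  have hdisc : ((-(2 * b / c)) ^ 2 - 4 * (b * (b + 1) / (c * (c + 1))) > 0) ↔
      b * (b - c) * (c + 1) > 0 := by
    have hE : (-(2 * b / c)) ^ 2 - 4 * (b * (b + 1) / (c * (c + 1))) =
        4 * (b * (b - c) * (c + 1)) / (c ^ 2 * (c + 1) ^ 2) := by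
      field_simp
      ring
    rw [hE, gt_iff_lt, div_pos_iff]
    constructor
    · rintro (⟨h1, _⟩ | ⟨_, h2⟩)
      · linarith
      · linarith
    · intro h
      exact Or.inl ⟨by linarith, hden⟩
  rw [hdisc]
  constructor
  · intro h
    rcases lt_trichotomy c (-1) with h1 | h1 | h1
    · have hbc : b * (b - c) < 0 := by nlinarith
      left
      refine ⟨h1, ?_, ?_⟩
      · rcases lt_trichotomy b 0 with hb | hb | hb
        · by_contra hx; push_neg at hx; nlinarith
        · exact absurd hb hb0
        · nlinarith
      · rcases lt_trichotomy b 0 with hb | hb | hb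
        · exact hb
        · exact absurd hb hb0
        · exfalso; nlinarith
    · exact absurd h1 hc1
    · rcases lt_trichotomy c 0 with h2 | h2 | h2
      · right; left
        refine ⟨h1, h2, ?_⟩
        rcases lt_trichotomy b 0 with h3 | h3 | h3
        · right; by_contra hx; push_neg at hx
          nlinarith [mul_nonneg (by linarith : (0:ℝ) ≤ b - c) (by linarith : (0:ℝ) ≤ c + 1)]
        · exact absurd h3 hb0
        · left; exact h3
      · exact absurd h2 hc0
      · right; right
        refine ⟨h2, ?_⟩
        rcases lt_trichotomy b 0 with h3 | h3 | h3
        · left; exact h3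
        · exact absurd h3 hb0
        · right; by_contra hx; push_neg at hx
          nlinarith [mul_nonneg (by linarith : (0:ℝ) ≤ c - b) (by linarith : (0:ℝ) ≤ c + 1)]
  · rintro (⟨h1, h2, h3⟩ | ⟨h1, h2, h3 | h3⟩ | ⟨h1, h2 | h2⟩)
    · nlinarith [mul_pos (mul_pos (by linarith : (0:ℝ) < -b) (by linarith : (0:ℝ) < b - c))
        (by linarith : (0:ℝ) < -(c + 1))]
    · nlinarith [mul_pos (mul_pos h3 (by linarith : (0:ℝ) < b - c)) (by linarith : (0:ℝ) < c + 1)]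
    · nlinarith [mul_pos (mul_pos (by nlinarith : (0:ℝ) < -b) (by linarith : (0:ℝ) < c - b))
        (by linarith : (0:ℝ) < c + 1)]
    · nlinarith [mul_pos (mul_pos (by linarith : (0:ℝ) < -b) (by linarith : (0:ℝ) < c - b))
        (by linarith : (0:ℝ) < c + 1)]
    · nlinarith [mul_pos (mul_pos (by linarith : (0:ℝ) < b) (by linarith : (0:ℝ) < b - c))
        (by linarith : (0:ℝ) < c + 1)]
end

section
/- The cubic polynomial ₂F₁(-3,b;c;z) has three real simple zeros if and only if one of the following holds: (i) c < -2 and 1+c < b < -1; (ii) -2 < c < -1 and -1 < b < 1+c; (iii) c > -1, c ≠ 0, and (b < -1 or b > c+1). -/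
lemma depressed_cubic_iff (p q : ℝ) :
    (∃ x₁ x₂ x₃ : ℝ, x₁ ≠ x₂ ∧ x₁ ≠ x₃ ∧ x₂ ≠ x₃ ∧
      x₁ ^ 3 + p * x₁ + q = 0 ∧ x₂ ^ 3 + p * x₂ + q = 0 ∧ x₃ ^ 3 + p * x₃ + q = 0) ↔
    4 * p ^ 3 + 27 * q ^ 2 < 0 := by
  constructor
  · rintro ⟨x₁, x₂, x₃, h12, h13, h23, e1, e2, e3⟩
    have hA : x₁ ^ 2 + x₁ * x₂ + x₂ ^ 2 + p = 0 := by
      have h := sub_ne_zero.mpr h12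
      have hm : (x₁ - x₂) * (x₁ ^ 2 + x₁ * x₂ + x₂ ^ 2 + p) = 0 := by
        linear_combination e1 - e2
      exact (mul_eq_zero.mp hm).resolve_left h
    have hB : x₁ ^ 2 + x₁ * x₃ + x₃ ^ 2 + p = 0 := by
      have h := sub_ne_zero.mpr h13
      have hm : (x₁ - x₃) * (x₁ ^ 2 + x₁ * x₃ + x₃ ^ 2 + p) = 0 := by
        linear_combination e1 - e3
      exact (mul_eq_zero.mp hm).resolve_left h
    have hs : x₁ + x₂ + x₃ = 0 := by
      have h := sub_ne_zero.mpr h23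
      have hm : (x₂ - x₃) * (x₁ + x₂ + x₃) = 0 := by linear_combination hA - hB
      exact (mul_eq_zero.mp hm).resolve_left h
    have hx3 : x₃ = -x₁ - x₂ := by linarith
    subst hx3
    have hp : p = -(x₁ ^ 2 + x₁ * x₂ + x₂ ^ 2) := by linarith
    subst hp
    have hq : q = x₁ ^ 2 * x₂ + x₁ * x₂ ^ 2 := by linear_combination e1
    subst hq
    have n1 : x₁ - x₂ ≠ 0 := sub_ne_zero.mpr h12
    have n2 : 2 * x₁ + x₂ ≠ 0 := fun h => h13 (by linarith)
    have n3 : x₁ + 2 * x₂ ≠ 0 := fun h => h23 (by linarith)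
    have hne : (x₁ - x₂) * (2 * x₁ + x₂) * (x₁ + 2 * x₂) ≠ 0 :=
      mul_ne_zero (mul_ne_zero n1 n2) n3
    have hpos : 0 < ((x₁ - x₂) * (2 * x₁ + x₂) * (x₁ + 2 * x₂)) ^ 2 :=
      lt_of_le_of_ne (sq_nonneg _) (Ne.symm (pow_ne_zero 2 hne))
    nlinarith [hpos]
  · intro h
    have hp : p < 0 := by
      by_contra h'
      push_neg at h'
      nlinarith [sq_nonneg q, mul_nonneg (mul_nonneg h' h') h']
    set f : ℝ → ℝ := fun x => x ^ 3 + p * x + q with hfdef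
    have hcont : Continuous f := by fun_prop
    set r := Real.sqrt (-p / 3) with hr
    have hr2 : r ^ 2 = -p / 3 := Real.sq_sqrt (by linarith)
    have hrpos : 0 < r := Real.sqrt_pos.mpr (by linarith)
    have hfr : f r = 2 * p / 3 * r + q := by
      show r ^ 3 + p * r + q = 2 * p / 3 * r + q
      linear_combination r * hr2
    have hfr' : f (-r) = -(2 * p / 3 * r) + q := by
      show (-r) ^ 3 + p * (-r) + q = -(2 * p / 3 * r) + q
      linear_combination (-r) * hr2
    have hprod : f r * f (-r) < 0 := by
      rw [hfr, hfr']
      have e : p ^ 2 * r ^ 2 = p ^ 2 * (-p / 3) := by rw [hr2]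
      nlinarith [e, h]
    have hlt : f r < f (-r) := by
      rw [hfr, hfr']
      nlinarith [mul_pos (neg_pos.mpr hp) hrpos]
    have hfrneg : f r < 0 := by nlinarith [hprod, hlt]
    have hfrpos : 0 < f (-r) := by nlinarith [hprod, hlt]
    set T := r + |p| + |q| + 1 with hT
    have habsp := abs_nonneg p
    have habsq := abs_nonneg q
    have hT1 : 1 ≤ T := by simp only [hT]; linarith
    have hTp : |p| + |q| + 1 ≤ T := by simp only [hT]; linarith
    have hT0 : 0 < T := by linarith
    have hpT : -|p| * T ≤ p * T := mul_le_mul_of_nonneg_right (neg_abs_le p) hT0.le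
    have h1 : 0 ≤ T ^ 2 * (T - 1) := mul_nonneg (sq_nonneg T) (by linarith)
    have h2 : 0 ≤ T * (T - (|p| + |q| + 1)) := mul_nonneg hT0.le (by linarith)
    have h3 : 0 ≤ |q| * (T - 1) := mul_nonneg habsq (by linarith)
    have hfT : 0 < f T := by
      show 0 < T ^ 3 + p * T + q
      nlinarith [neg_abs_le q, h1, h2, h3, hpT]
    have hfT' : f (-T) < 0 := by
      show (-T) ^ 3 + p * (-T) + q < 0
      nlinarith [le_abs_self q, h1, h2, h3, hpT]
    have hrT : r < T := by linarith
    obtain ⟨x₁, hx₁m, hx₁⟩ :=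
      intermediate_value_Ioo (by linarith : -T ≤ -r) hcont.continuousOn
        (Set.mem_Ioo.mpr ⟨hfT', hfrpos⟩)
    obtain ⟨x₂, hx₂m, hx₂⟩ :=
      intermediate_value_Ioo' (by linarith : -r ≤ r) hcont.continuousOn
        (Set.mem_Ioo.mpr ⟨hfrneg, hfrpos⟩)
    obtain ⟨x₃, hx₃m, hx₃⟩ :=
      intermediate_value_Ioo (by linarith : r ≤ T) hcont.continuousOn
        (Set.mem_Ioo.mpr ⟨hfrneg, hfT⟩)
    refine ⟨x₁, x₂, x₃, ?_, ?_, ?_, hx₁, hx₂, hx₃⟩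
    · exact ne_of_lt (lt_trans hx₁m.2 hx₂m.1)
    · exact ne_of_lt (lt_trans (lt_trans hx₁m.2 (lt_trans hx₂m.1 hx₂m.2)) hx₃m.1)
    · exact ne_of_lt (lt_trans hx₂m.2 hx₃m.1)

lemma cubic_roots_iff (a3 a2 a1 a0 : ℝ) (ha : a3 ≠ 0) :
    (∃ z₁ z₂ z₃ : ℝ, z₁ ≠ z₂ ∧ z₁ ≠ z₃ ∧ z₂ ≠ z₃ ∧
      a3 * z₁ ^ 3 + a2 * z₁ ^ 2 + a1 * z₁ + a0 = 0 ∧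
      a3 * z₂ ^ 3 + a2 * z₂ ^ 2 + a1 * z₂ + a0 = 0 ∧
      a3 * z₃ ^ 3 + a2 * z₃ ^ 2 + a1 * z₃ + a0 = 0) ↔
    0 < 18 * a3 * a2 * a1 * a0 - 4 * a2 ^ 3 * a0 + a2 ^ 2 * a1 ^ 2
        - 4 * a3 * a1 ^ 3 - 27 * a3 ^ 2 * a0 ^ 2 := by
  set p : ℝ := (3 * a3 * a1 - a2 ^ 2) / (3 * a3 ^ 2) with hpdef
  set q : ℝ := (2 * a2 ^ 3 - 9 * a3 * a2 * a1 + 27 * a3 ^ 2 * a0) / (27 * a3 ^ 3) with hqdef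
  set s : ℝ := a2 / (3 * a3) with hsdef
  have key : ∀ z : ℝ, (z + s) ^ 3 + p * (z + s) + q =
      (a3 * z ^ 3 + a2 * z ^ 2 + a1 * z + a0) / a3 := by
    intro z
    rw [hpdef, hqdef, hsdef]
    field_simp
    ring
  have ha4 : 0 < a3 ^ 4 := lt_of_le_of_ne (by positivity) (Ne.symm (pow_ne_zero 4 ha))
  have hdisc : 4 * p ^ 3 + 27 * q ^ 2 =
      -(18 * a3 * a2 * a1 * a0 - 4 * a2 ^ 3 * a0 + a2 ^ 2 * a1 ^ 2
        - 4 * a3 * a1 ^ 3 - 27 * a3 ^ 2 * a0 ^ 2) / a3 ^ 4 := by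
    rw [hpdef, hqdef]
    field_simp
    ring
  constructor
  · rintro ⟨z₁, z₂, z₃, h12, h13, h23, e1, e2, e3⟩
    have hdep : 4 * p ^ 3 + 27 * q ^ 2 < 0 := by
      refine (depressed_cubic_iff p q).mp
        ⟨z₁ + s, z₂ + s, z₃ + s, ?_, ?_, ?_, ?_, ?_, ?_⟩
      · exact fun h => h12 (by linarith [add_right_cancel h])
      · exact fun h => h13 (by linarith [add_right_cancel h])
      · exact fun h => h23 (by linarith [add_right_cancel h])
      · rw [key z₁, e1, zero_div]
      · rw [key z₂, e2, zero_div]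
      · rw [key z₃, e3, zero_div]
    rw [hdisc] at hdep
    by_contra hle
    push_neg at hle
    have : 0 ≤ -(18 * a3 * a2 * a1 * a0 - 4 * a2 ^ 3 * a0 + a2 ^ 2 * a1 ^ 2
        - 4 * a3 * a1 ^ 3 - 27 * a3 ^ 2 * a0 ^ 2) / a3 ^ 4 :=
      div_nonneg (by linarith) ha4.le
    linarith
  · intro h
    have hdep : 4 * p ^ 3 + 27 * q ^ 2 < 0 := by
      rw [hdisc]
      exact div_neg_of_neg_of_pos (by linarith) ha4
    obtain ⟨x₁, x₂, x₃, h12, h13, h23, e1, e2, e3⟩ := (depressed_cubic_iff p q).mpr hdep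
    refine ⟨x₁ - s, x₂ - s, x₃ - s, ?_, ?_, ?_, ?_, ?_, ?_⟩
    · exact fun h' => h12 (by linarith [sub_left_injective.eq_iff.mp h'])
    · exact fun h' => h13 (by linarith [sub_left_injective.eq_iff.mp h'])
    · exact fun h' => h23 (by linarith [sub_left_injective.eq_iff.mp h'])
    all_goals {
      first
      | (have hz := key (x₁ - s)
         rw [sub_add_cancel, e1] at hz
         exact (div_eq_zero_iff.mp hz.symm).resolve_right ha)
      | (have hz := key (x₂ - s)
         rw [sub_add_cancel, e2] at hz
         exact (div_eq_zero_iff.mp hz.symm).resolve_right ha)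
      | (have hz := key (x₃ - s)
         rw [sub_add_cancel, e3] at hz
         exact (div_eq_zero_iff.mp hz.symm).resolve_right ha) }

lemma region_iff (b c : ℝ) (hb0 : b ≠ 0) (hc0 : c ≠ 0) (hc1 : c ≠ -1) (hc2 : c ≠ -2) :
    0 < 108 * b ^ 2 * (b + 1) * (b - c - 1) * (c + 1) * (c + 2) ^ 2 * (b - c) ^ 2 ↔
      ((c < -2 ∧ 1 + c < b ∧ b < -1) ∨
       (-2 < c ∧ c < -1 ∧ -1 < b ∧ b < 1 + c) ∨
       (c > -1 ∧ c ≠ 0 ∧ (b < -1 ∨ b > c + 1))) := by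
  have hb2 : 0 < b ^ 2 := lt_of_le_of_ne (sq_nonneg b) (Ne.symm (pow_ne_zero 2 hb0))
  have hc2' : c + 2 ≠ 0 := fun h => hc2 (by linarith)
  have hc22 : 0 < (c + 2) ^ 2 := lt_of_le_of_ne (sq_nonneg _) (Ne.symm (pow_ne_zero 2 hc2'))
  constructor
  · intro h
    have hbc : b ≠ c := by
      intro he
      rw [he] at h
      have hz : 108 * c ^ 2 * (c + 1) * (c - c - 1) * (c + 1) * (c + 2) ^ 2 * (c - c) ^ 2 = 0 := by
        ring
      linarith
    have hbc2 : 0 < (b - c) ^ 2 :=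
      lt_of_le_of_ne (sq_nonneg _) (Ne.symm (pow_ne_zero 2 (sub_ne_zero.mpr hbc)))
    have hX : 0 < (b + 1) * (b - c - 1) * (c + 1) := by
      by_contra hX'
      push_neg at hX'
      have hK : 0 < b ^ 2 * (c + 2) ^ 2 * (b - c) ^ 2 := mul_pos (mul_pos hb2 hc22) hbc2
      nlinarith [h, mul_nonneg hK.le (neg_nonneg.mpr hX')]
    rcases lt_trichotomy c (-1) with hc | hc | hc
    · rcases lt_trichotomy c (-2) with hcc | hcc | hcc
      · left
        refine ⟨hcc, ?_, ?_⟩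
        · by_contra hle; push_neg at hle
          nlinarith [hX, mul_nonneg (mul_nonneg
            (by linarith : (0:ℝ) ≤ -(b + 1)) (by linarith : (0:ℝ) ≤ -(b - c - 1)))
            (by linarith : (0:ℝ) ≤ -(c + 1))]
        · by_contra hle; push_neg at hle
          nlinarith [hX, mul_nonneg (mul_nonneg
            (by linarith : (0:ℝ) ≤ b + 1) (by linarith : (0:ℝ) ≤ b - c - 1))
            (by linarith : (0:ℝ) ≤ -(c + 1))]
      · exact absurd hcc hc2
      · right; left
        refine ⟨hcc, hc, ?_, ?_⟩
        · by_contra hle; push_neg at hle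
          nlinarith [hX, mul_nonneg (mul_nonneg
            (by linarith : (0:ℝ) ≤ -(b + 1)) (by linarith : (0:ℝ) ≤ -(b - c - 1)))
            (by linarith : (0:ℝ) ≤ -(c + 1))]
        · by_contra hle; push_neg at hle
          nlinarith [hX, mul_nonneg (mul_nonneg
            (by linarith : (0:ℝ) ≤ b + 1) (by linarith : (0:ℝ) ≤ b - c - 1))
            (by linarith : (0:ℝ) ≤ -(c + 1))]
    · exact absurd hc hc1
    · right; right
      refine ⟨hc, hc0, ?_⟩
      by_contra hle; push_neg at hle
      nlinarith [hX, mul_nonneg (mul_nonneg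
        (by linarith [hle.1] : (0:ℝ) ≤ b + 1) (by linarith [hle.2] : (0:ℝ) ≤ -(b - c - 1)))
        (by linarith : (0:ℝ) ≤ c + 1)]
  · intro h
    have key : (b ≠ c) → 0 < (b + 1) * (b - c - 1) * (c + 1) →
        0 < 108 * b ^ 2 * (b + 1) * (b - c - 1) * (c + 1) * (c + 2) ^ 2 * (b - c) ^ 2 := by
      intro hbc hX
      have hbc2 : 0 < (b - c) ^ 2 :=
        lt_of_le_of_ne (sq_nonneg _) (Ne.symm (pow_ne_zero 2 (sub_ne_zero.mpr hbc)))
      nlinarith [mul_pos (mul_pos (mul_pos hb2 hc22) hbc2) hX]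
    rcases h with ⟨h1, h2, h3⟩ | ⟨h1, h2, h3, h4⟩ | ⟨h1, h2, h3⟩
    · refine key (by intro he; rw [he] at h2; linarith) ?_
      exact mul_pos_of_neg_of_neg
        (mul_neg_of_neg_of_pos (by linarith) (by linarith)) (by linarith)
    · refine key (by intro he; rw [he] at h3; linarith) ?_
      exact mul_pos_of_neg_of_neg
        (mul_neg_of_pos_of_neg (by linarith) (by linarith)) (by linarith)
    · rcases h3 with h3 | h3
      · refine key (by intro he; rw [he] at h3; linarith) ?_
        exact mul_pos
          (mul_pos_of_neg_of_neg (by linarith) (by linarith)) (by linarith)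
      · refine key (by intro he; rw [he] at h3; linarith) ?_
        exact mul_pos (mul_pos (by linarith) (by linarith)) (by linarith)

theorem stmt_4 (b c : ℝ) (hb0 : b ≠ 0) (hb1 : b ≠ -1) (hb2 : b ≠ -2)
    (hc0 : c ≠ 0) (hc1 : c ≠ -1) (hc2 : c ≠ -2) :
    (∃ z₁ z₂ z₃ : ℝ, z₁ ≠ z₂ ∧ z₁ ≠ z₃ ∧ z₂ ≠ z₃ ∧
        (∀ z ∈ ({z₁, z₂, z₃} : Set ℝ),
          1 - 3 * b / c * z + 3 * b * (b + 1) / (c * (c + 1)) * z ^ 2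
            - b * (b + 1) * (b + 2) / (c * (c + 1) * (c + 2)) * z ^ 3 = 0)) ↔
      ((c < -2 ∧ 1 + c < b ∧ b < -1) ∨
       (-2 < c ∧ c < -1 ∧ -1 < b ∧ b < 1 + c) ∨
       (c > -1 ∧ c ≠ 0 ∧ (b < -1 ∨ b > c + 1))) := by
  have hb1' : b + 1 ≠ 0 := fun h => hb1 (by linarith)
  have hb2' : b + 2 ≠ 0 := fun h => hb2 (by linarith)
  have hc1' : c + 1 ≠ 0 := fun h => hc1 (by linarith)
  have hc2' : c + 2 ≠ 0 := fun h => hc2 (by linarith)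
  have hD : c * (c + 1) * (c + 2) ≠ 0 := mul_ne_zero (mul_ne_zero hc0 hc1') hc2'
  have hA : -(b * (b + 1) * (b + 2) / (c * (c + 1) * (c + 2))) ≠ 0 :=
    neg_ne_zero.mpr (div_ne_zero (mul_ne_zero (mul_ne_zero hb0 hb1') hb2') hD)
  have hexpr : ∀ z : ℝ, 1 - 3 * b / c * z + 3 * b * (b + 1) / (c * (c + 1)) * z ^ 2
      - b * (b + 1) * (b + 2) / (c * (c + 1) * (c + 2)) * z ^ 3 =
      -(b * (b + 1) * (b + 2) / (c * (c + 1) * (c + 2))) * z ^ 3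
        + 3 * b * (b + 1) / (c * (c + 1)) * z ^ 2 + -(3 * b / c) * z + 1 := by
    intro z; ring
  have step1 : (∃ z₁ z₂ z₃ : ℝ, z₁ ≠ z₂ ∧ z₁ ≠ z₃ ∧ z₂ ≠ z₃ ∧
      (∀ z ∈ ({z₁, z₂, z₃} : Set ℝ),
        1 - 3 * b / c * z + 3 * b * (b + 1) / (c * (c + 1)) * z ^ 2
          - b * (b + 1) * (b + 2) / (c * (c + 1) * (c + 2)) * z ^ 3 = 0)) ↔
      (∃ z₁ z₂ z₃ : ℝ, z₁ ≠ z₂ ∧ z₁ ≠ z₃ ∧ z₂ ≠ z₃ ∧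
        -(b * (b + 1) * (b + 2) / (c * (c + 1) * (c + 2))) * z₁ ^ 3
          + 3 * b * (b + 1) / (c * (c + 1)) * z₁ ^ 2 + -(3 * b / c) * z₁ + 1 = 0 ∧
        -(b * (b + 1) * (b + 2) / (c * (c + 1) * (c + 2))) * z₂ ^ 3
          + 3 * b * (b + 1) / (c * (c + 1)) * z₂ ^ 2 + -(3 * b / c) * z₂ + 1 = 0 ∧
        -(b * (b + 1) * (b + 2) / (c * (c + 1) * (c + 2))) * z₃ ^ 3
          + 3 * b * (b + 1) / (c * (c + 1)) * z₃ ^ 2 + -(3 * b / c) * z₃ + 1 = 0) := by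
    constructor
    · rintro ⟨z₁, z₂, z₃, h12, h13, h23, hall⟩
      exact ⟨z₁, z₂, z₃, h12, h13, h23,
        (hexpr z₁) ▸ hall z₁ (by simp), (hexpr z₂) ▸ hall z₂ (by simp),
        (hexpr z₃) ▸ hall z₃ (by simp)⟩
    · rintro ⟨z₁, z₂, z₃, h12, h13, h23, e1, e2, e3⟩
      refine ⟨z₁, z₂, z₃, h12, h13, h23, ?_⟩
      intro z hz
      simp only [Set.mem_insert_iff, Set.mem_singleton_iff] at hz
      rcases hz with rfl | rfl | rfl
      · rw [hexpr]; exact e1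
      · rw [hexpr]; exact e2
      · rw [hexpr]; exact e3
  refine step1.trans ((cubic_roots_iff _ _ _ _ hA).trans ?_)
  rw [← region_iff b c hb0 hc0 hc1 hc2]
  have hD4 : (0:ℝ) < (c * (c + 1) * (c + 2)) ^ 4 :=
    lt_of_le_of_ne (by positivity) (Ne.symm (pow_ne_zero 4 hD))
  have key : ∀ x y : ℝ, x = y / ((c * (c + 1) * (c + 2)) ^ 4) → (0 < x ↔ 0 < y) := by
    intro x y hxy
    subst hxy
    constructor
    · intro h'
      have := mul_pos h' hD4
      rwa [div_mul_cancel₀ _ (ne_of_gt hD4)] at this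
    · intro h'
      exact div_pos h' hD4
  apply key
  field_simp
  ring
end

section
/- For n ≥ 2 and appropriate b, c, the polynomial identity ₂F₁(-n,b;c;z) = (1/n)(z - (c+n-1)/(b+n-1)) · d/dz[₂F₁(-n,b;c;z)] - ((b-c)(n-1))/(c(b+n-1)) · ₂F₁(-n+2, b; c+1; z) holds. -/
open Finset Set

/-- Pochhammer symbol (rising factorial) `(a)_k` for real `a`. -/
noncomputable def poch (a : ℝ) (k : ℕ) : ℝ := (ascPochhammer ℝ k).eval a

/-- Terminating hypergeometric polynomial `₂F₁(-n, b; c; z)`. -/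
noncomputable def hyp (n : ℕ) (b c z : ℝ) : ℝ :=
  ∑ k ∈ Finset.range (n + 1),
    poch (-(n : ℝ)) k * poch b k / (poch c k * (k.factorial : ℝ)) * z ^ k

/-!
Compare coefficients of `z ^ k`. Writing `A k` for the coefficients of `₂F₁(-n, b; c; z)` and
`A' k` for those of `₂F₁(-n + 2, b; c + 1; z)`, the ratios
`(k + 1) A (k + 1) / A k = (k - n) (b + k) / (c + k)` and
`A' k / A k = c (k - n) (k - n + 1) / (n (n - 1) (c + k))`
reduce the identity, after clearing `c + k`, to
`(c + k) (b + n - 1) = (c + n - 1) (b + k) - (b - c) (n - 1 - k)`.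
-/

lemma poch_succ (a : ℝ) (k : ℕ) : poch a (k + 1) = poch a k * (a + k) :=
  ascPochhammer_succ_eval k a

lemma poch_succ_left (a : ℝ) (k : ℕ) : poch a (k + 1) = a * poch (a + 1) k := by
  simp [poch, ascPochhammer_succ_left, Polynomial.eval_comp]

lemma poch_ne_zero_iff (a : ℝ) (k : ℕ) : poch a k ≠ 0 ↔ ∀ j < k, a ≠ -(j : ℝ) := by
  simp [poch, eq_neg_iff_add_eq_zero, add_comm]

lemma poch_add_one_mul (a : ℝ) (k : ℕ) : poch (a + 1) k * a = poch a k * (a + k) := by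
  rw [← poch_succ, poch_succ_left, mul_comm]

lemma poch_add_two_mul (a : ℝ) (k : ℕ) :
    poch (a + 2) k * (a * (a + 1)) = poch a k * ((a + k) * (a + k + 1)) := by
  have h1 := poch_add_one_mul (a + 1) k
  rw [add_assoc, one_add_one_eq_two] at h1
  linear_combination a * h1 + (a + 1 + k) * poch_add_one_mul a k

lemma poch_neg_natCast_of_lt {m k : ℕ} (h : m < k) : poch (-(m : ℝ)) k = 0 :=
  ascPochhammer_eval_neg_coe_nat_of_lt h

noncomputable def hypCoeff (n : ℕ) (b c : ℝ) (k : ℕ) : ℝ :=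
  poch (-(n : ℝ)) k * poch b k / (poch c k * (k.factorial : ℝ))

lemma hypCoeff_of_lt {n k : ℕ} (b c : ℝ) (h : n < k) : hypCoeff n b c k = 0 := by
  simp [hypCoeff, poch_neg_natCast_of_lt h]

lemma hyp_eq_sum (n : ℕ) (b c z : ℝ) :
    hyp n b c z = ∑ k ∈ range (n + 1), hypCoeff n b c k * z ^ k := rfl

lemma hyp_eq_sum_range_of_le {n m : ℕ} (b c z : ℝ) (h : n ≤ m) :
    hyp n b c z = ∑ k ∈ range (m + 1), hypCoeff n b c k * z ^ k := by
  rw [hyp_eq_sum]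
  refine sum_subset (range_subset_range.2 (by omega)) fun k _ hk => ?_
  rw [hypCoeff_of_lt b c (by simpa using hk), zero_mul]

lemma hasDerivAt_hyp (n : ℕ) (b c z : ℝ) :
    HasDerivAt (hyp n b c)
      (∑ k ∈ range (n + 1), (k + 1) * hypCoeff n b c (k + 1) * z ^ k) z := by
  have hsum : HasDerivAt (hyp n b c)
      (∑ k ∈ range (n + 1), hypCoeff n b c k * (k * z ^ (k - 1))) z := by
    rw [show hyp n b c = _ from funext (hyp_eq_sum n b c)]
    exact HasDerivAt.fun_sum fun k _ => (hasDerivAt_pow k z).const_mul (hypCoeff n b c k)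
  convert hsum using 1
  rw [sum_range_succ, hypCoeff_of_lt b c (Nat.lt_succ_self n), sum_range_succ']
  simp only [zero_mul, add_zero, Nat.cast_zero, mul_zero, add_tsub_cancel_right]
  push_cast
  exact sum_congr rfl fun k _ => by ring

lemma sum_mul_hypCoeff_succ (n : ℕ) (b c z : ℝ) :
    z * ∑ k ∈ range (n + 1), (k + 1) * hypCoeff n b c (k + 1) * z ^ k
      = ∑ k ∈ range (n + 1), k * hypCoeff n b c k * z ^ k := by
  conv_lhs => rw [sum_range_succ, hypCoeff_of_lt b c (Nat.lt_succ_self n)]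
  conv_rhs => rw [sum_range_succ']
  simp only [mul_zero, zero_mul, add_zero, Nat.cast_zero, mul_sum]
  push_cast
  exact sum_congr rfl fun k _ => by ring

lemma hypCoeff_succ_mul {n k : ℕ} (b : ℝ) {c : ℝ} (hc : poch c (k + 1) ≠ 0) :
    (k + 1) * hypCoeff n b c (k + 1) * (c + k) = (k - n) * (b + k) * hypCoeff n b c k := by
  rw [poch_succ] at hc
  have hck : c + k ≠ 0 := right_ne_zero_of_mul hc
  have hc0 : poch c k ≠ 0 := left_ne_zero_of_mul hc
  simp only [hypCoeff, poch_succ, Nat.factorial_succ]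
  push_cast
  field_simp
  ring

lemma hypCoeff_add_two_mul {n k : ℕ} (b : ℝ) {c : ℝ} (hc : poch c (k + 1) ≠ 0) :
    (c + k) * ((n + 2) * (n + 1)) * hypCoeff n b (c + 1) k
      = c * ((k - n - 2) * (k - n - 1)) * hypCoeff (n + 2) b c k := by
  have hc0 : c ≠ 0 := left_ne_zero_of_mul (poch_succ_left c k ▸ hc)
  rw [poch_succ] at hc
  have hck : c + k ≠ 0 := right_ne_zero_of_mul hc
  have hck0 : poch c k ≠ 0 := left_ne_zero_of_mul hc
  have hc1 : poch (c + 1) k = poch c k * (c + k) / c := by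
    rw [eq_div_iff hc0, poch_add_one_mul]
  have hn := poch_add_two_mul (-((n + 2 : ℕ) : ℝ)) k
  push_cast at hn
  simp only [hypCoeff, hc1]
  push_cast
  rw [show -(n : ℝ) = -(n + 2) + 2 by ring]
  field_simp
  linear_combination poch b k * hn

lemma hypCoeff_contiguous {n k : ℕ} (hn : 2 ≤ n) (hk : k ≤ n) {b c : ℝ}
    (hc : ∀ j : ℕ, j < n → c ≠ -(j : ℝ)) (hb : b + n - 1 ≠ 0) :
    hypCoeff n b c k =
      1 / n * (k * hypCoeff n b c k
          - (c + n - 1) / (b + n - 1) * ((k + 1) * hypCoeff n b c (k + 1)))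
        - (b - c) * (n - 1) / (c * (b + n - 1)) * hypCoeff (n - 2) b (c + 1) k := by
  obtain ⟨m, rfl⟩ := Nat.exists_eq_add_of_le' hn
  have hc0 : c ≠ 0 := by simpa using hc 0 (by omega)
  rw [Nat.add_sub_cancel]
  push_cast at hb ⊢
  rcases hk.lt_or_eq with hlt | rfl
  · have hpoch : poch c (k + 1) ≠ 0 := (poch_ne_zero_iff c (k + 1)).2 fun j hj => hc j (by omega)
    have hck : c + k ≠ 0 := right_ne_zero_of_mul (poch_succ c k ▸ hpoch)
    have hsucc := hypCoeff_succ_mul (n := m + 2) b hpoch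
    have htwo := hypCoeff_add_two_mul (n := m) b hpoch
    push_cast at hsucc
    field_simp
    refine mul_left_cancel₀ hck ?_
    linear_combination c * (c + m + 1) * hsucc + (b - c) * htwo
  · rw [hypCoeff_of_lt b c (Nat.lt_succ_self _), hypCoeff_of_lt b (c + 1) (by omega : m < m + 2)]
    push_cast
    field_simp
    ring

theorem stmt_6 (n : ℕ) (hn : 2 ≤ n) (b c : ℝ)
    (hc : ∀ j : ℕ, j < n → c ≠ -(j : ℝ)) (hb : b + n - 1 ≠ 0) (z : ℝ) :
    hyp n b c z =
      (1 / (n : ℝ)) * (z - (c + n - 1) / (b + n - 1)) * deriv (fun t => hyp n b c t) z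
        - (b - c) * (n - 1) / (c * (b + n - 1)) * hyp (n - 2) b (c + 1) z := by
  rw [(hasDerivAt_hyp n b c z).deriv, hyp_eq_sum, hyp_eq_sum_range_of_le b (c + 1) z (n.sub_le 2),
    mul_sub, sub_mul, mul_assoc, sum_mul_hypCoeff_succ, mul_sum, mul_sum, mul_sum,
    ← sum_sub_distrib, ← sum_sub_distrib]
  refine sum_congr rfl fun k hk => ?_
  conv_lhs => rw [hypCoeff_contiguous hn (Nat.lt_succ_iff.1 (mem_range.1 hk)) hc hb]
  ring
end

section
/- Let θ_k satisfy θ₁ = -nb/c and θ_{k+1} = α_{k,1} θ_{k-1} for 2 ≤ k ≤ n-2 with α_{k,l} as below. Then for all valid k ≥ 0, θ_{2k+1} = -(nb/c) · α_{2,k}, where α_{2,k} = [((2-n)/2)_k ((1-n-b)/4)_k ((1-b+c)/2)_k] / [(-b/2)_k ((3-b-n)/4)_k ((1-n-c)/2)_k]. -/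
open Finset Set

lemma recurrence_coeff_two_mul_add_two (n : ℕ) (b c : ℝ) (m : ℕ) :
    ((((2 * m + 2 : ℕ) : ℝ) - n) / 2 * (((2 : ℝ) * ((2 * m + 2 : ℕ) : ℝ) - n - b - 3) / 4) *
        ((((2 * m + 2 : ℕ) : ℝ) - b - 1 + c) / 2)) /
      (((((2 * m + 2 : ℕ) : ℝ) - b - 2) / 2) * (((2 : ℝ) * ((2 * m + 2 : ℕ) : ℝ) - b - 1 - n) / 4) *
        ((((2 * m + 2 : ℕ) : ℝ) - n - 1 - c) / 2)) =
      (((2 - n) / 2 + m) * ((1 - n - b) / 4 + m) * ((1 - b + c) / 2 + m)) /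
        ((-b / 2 + m) * ((3 - b - n) / 4 + m) * ((1 - n - c) / 2 + m)) := by
  congr 1 <;> push_cast <;> ring

theorem stmt_9_general (n : ℕ) (b c : ℝ) (θ : ℕ → ℝ)
    (hθ1 : θ 1 = -((n : ℝ) * b) / c)
    (hrec : ∀ k : ℕ, 2 ≤ k → k ≤ n - 2 →
      θ (k + 1) =
        (((k : ℝ) - n) / 2 * (((2 : ℝ) * k - n - b - 3) / 4) * (((k : ℝ) - b - 1 + c) / 2)) /
          ((((k : ℝ) - b - 2) / 2) * (((2 : ℝ) * k - b - 1 - n) / 4) *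
            (((k : ℝ) - n - 1 - c) / 2)) * θ (k - 1)) :
    ∀ k : ℕ, k ≤ (n - 2) / 2 →
      θ (2 * k + 1) =
        -((n : ℝ) * b / c) *
          (poch ((2 - n) / 2) k * poch ((1 - n - b) / 4) k * poch ((1 - b + c) / 2) k) /
            (poch (-b / 2) k * poch ((3 - b - n) / 4) k * poch ((1 - n - c) / 2) k) := by
  intro k hk
  induction k with
  | zero => simp [hθ1, poch, neg_div]
  | succ m ih =>
    have step := hrec (2 * m + 2) (by omega) (by omega)
    rw [show 2 * m + 2 - 1 = 2 * m + 1 by omega, ih (by omega),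
      recurrence_coeff_two_mul_add_two] at step
    rw [show 2 * (m + 1) + 1 = 2 * m + 2 + 1 by ring, step, div_mul_div_comm]
    simp only [poch_succ]
    congr 1 <;> ring

theorem stmt_9 (n : ℕ) (hn : 4 ≤ n) (b c : ℝ) (θ : ℕ → ℝ)
    (hθ1 : θ 1 = -((n : ℝ) * b) / c)
    (hθ2 : θ 2 = (b - c) * (n - 1) / (c * (b + n - 1)))
    (hrec : ∀ k : ℕ, 2 ≤ k → k ≤ n - 2 →
      θ (k + 1) =
        (((k : ℝ) - n) / 2 * (((2 : ℝ) * k - n - b - 3) / 4) * (((k : ℝ) - b - 1 + c) / 2)) /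
          ((((k : ℝ) - b - 2) / 2) * (((2 : ℝ) * k - b - 1 - n) / 4) *
            (((k : ℝ) - n - 1 - c) / 2)) * θ (k - 1)) :
    ∀ k : ℕ, k ≤ (n - 2) / 2 →
      θ (2 * k + 1) =
        -((n : ℝ) * b / c) *
          (poch ((2 - n) / 2) k * poch ((1 - n - b) / 4) k * poch ((1 - b + c) / 2) k) /
            (poch (-b / 2) k * poch ((3 - b - n) / 4) k * poch ((1 - n - c) / 2) k) :=
  stmt_9_general n b c θ hθ1 hrec
end

section
/- Let n ≥ 4. The quantities c₁ = (n-1)(n+c-1)(b-c)/((n+b-2)(n+b-1)²) and c_k = (n-k)(n+c-k)(b+1-k)(b-c+1-k)/((n+b+2-2k)(n+b-2k)(n+b+1-2k)²) for k = 2,...,n-1 are all positive if and only if (c,b) ∈ R₁ ∪ R₂ ∪ R₃ ∪ R₄, where R₁ = {c+n-2 < b < 2-n}, R₂ = {c > -1, b < 2-n}, R₃ = {c > -1, b > n-2, b > c+n-2}, R₄ = {-1 < c < 0, c+n-2 < b < n-2}. -/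
private lemma sq_pos'' {x : ℝ} (hx : x ≠ 0) : 0 < x ^ 2 :=
  (sq_nonneg x).lt_of_ne (Ne.symm (pow_ne_zero 2 hx))

private lemma num_pos' {a d : ℝ} (h : 0 < a / d) (hd : 0 < d) : 0 < a := by
  rcases div_pos_iff.mp h with ⟨h1, _⟩ | ⟨_, h2⟩
  · exact h1
  · linarith

private lemma num_neg' {a d : ℝ} (h : 0 < a / d) (hd : d < 0) : a < 0 := by
  rcases div_pos_iff.mp h with ⟨_, h2⟩ | ⟨h1, _⟩
  · linarith
  · exact h1

set_option maxHeartbeats 2000000 in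
theorem stmt_11 (n : ℕ) (hn : 4 ≤ n) (b c : ℝ)
    (h1 : (n : ℝ) + b - 1 ≠ 0) (h2 : (n : ℝ) + b - 2 ≠ 0)
    (h3 : ∀ k : ℕ, 2 ≤ k → k ≤ n - 1 →
      (n : ℝ) + b + 2 - 2 * k ≠ 0 ∧ (n : ℝ) + b - 2 * k ≠ 0 ∧ (n : ℝ) + b + 1 - 2 * k ≠ 0) :
    (0 < ((n : ℝ) - 1) * (n + c - 1) * (b - c) / ((n + b - 2) * (n + b - 1) ^ 2) ∧
      ∀ k : ℕ, 2 ≤ k → k ≤ n - 1 →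
        0 < ((n : ℝ) - k) * (n + c - k) * (b + 1 - k) * (b - c + 1 - k) /
              ((n + b + 2 - 2 * k) * (n + b - 2 * k) * (n + b + 1 - 2 * k) ^ 2)) ↔
      ((c + n - 2 < b ∧ b < 2 - n) ∨
       (c > -1 ∧ b < 2 - n) ∨
       (c > -1 ∧ b > (n : ℝ) - 2 ∧ b > c + n - 2) ∨
       (-1 < c ∧ c < 0 ∧ c + n - 2 < b ∧ b < (n : ℝ) - 2)) := by
  have hq : (4 : ℝ) ≤ (n : ℝ) := by exact_mod_cast hn
  have cast1 : ((n - 1 : ℕ) : ℝ) = (n : ℝ) - 1 := by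
    rw [Nat.cast_sub (by omega : 1 ≤ n)]; norm_num
  have cast2 : ((n - 2 : ℕ) : ℝ) = (n : ℝ) - 2 := by
    rw [Nat.cast_sub (by omega : 2 ≤ n)]; norm_num
  constructor
  · rintro ⟨hc1, hck⟩
    -- instantiate at k = n-1
    have E1 := hck (n - 1) (by omega) (le_refl _)
    rw [cast1] at E1
    have h31 := (h3 (n - 1) (by omega) (le_refl _))
    rw [cast1] at h31
    rcases lt_trichotomy b (2 - (n : ℝ)) with hbA | hbE | hbBC
    · -- Case A : b < 2 - n
      have hd1 : (n : ℝ) + b + 2 - 2 * ((n : ℝ) - 1) < 0 := by linarith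
      have hd2 : (n : ℝ) + b - 2 * ((n : ℝ) - 1) < 0 := by linarith
      have hsq : 0 < ((n : ℝ) + b + 1 - 2 * ((n : ℝ) - 1)) ^ 2 :=
        sq_pos'' (by intro h; linarith [h.ge, h.le] : ((n : ℝ) + b + 1 - 2 * ((n : ℝ) - 1)) ≠ 0)
      have hden : 0 < ((n : ℝ) + b + 2 - 2 * ((n : ℝ) - 1)) * ((n : ℝ) + b - 2 * ((n : ℝ) - 1)) *
          ((n : ℝ) + b + 1 - 2 * ((n : ℝ) - 1)) ^ 2 :=
        mul_pos (mul_pos_of_neg_of_neg hd1 hd2) hsq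
      have hNum1 := num_pos' E1 hden
      have hP : (c + 1) * (b - c + 2 - (n : ℝ)) < 0 := by
        nlinarith [hNum1, show (0 : ℝ) < (n : ℝ) - 2 - b by linarith]
      rcases mul_neg_iff.mp hP with ⟨hcp, hbc⟩ | ⟨hcn, hbc⟩
      · exact Or.inr (Or.inl ⟨by linarith, hbA⟩)
      · exact Or.inl ⟨by linarith, hbA⟩
    · exact absurd (by rw [hbE]; ring) h2
    · rcases lt_trichotomy b ((n : ℝ) - 2) with hbC | hbE | hbB
      · -- Case C : 2 - n < b < n - 2
        rcases lt_trichotomy b ((n : ℝ) - 4) with hbCII | hbE4 | hbCI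
        · -- Case C-II : b < n - 4 : derive contradiction
          exfalso
          -- floor setup
          have ht1 : 1 < ((n : ℝ) + b) / 2 := by linarith
          have ht2 : ((n : ℝ) + b) / 2 < (n : ℝ) - 2 := by linarith
          have hfl0 : 1 ≤ ⌊((n : ℝ) + b) / 2⌋ := Int.le_floor.mpr (by exact_mod_cast ht1.le)
          have hflt : (⌊((n : ℝ) + b) / 2⌋ : ℝ) < ((n : ℝ) + b) / 2 := by
            rcases (Int.floor_le (((n : ℝ) + b) / 2)).lt_or_eq with h | h
            · exact h
            · exfalso
              have h2' : 2 ≤ ⌊((n : ℝ) + b) / 2⌋ := by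
                by_contra hcon
                push_neg at hcon
                have he : ⌊((n : ℝ) + b) / 2⌋ = 1 := by omega
                rw [he] at h
                push_cast at h
                linarith
              set m := (⌊((n : ℝ) + b) / 2⌋).toNat with hm
              have hmz : ((m : ℕ) : ℤ) = ⌊((n : ℝ) + b) / 2⌋ :=
                Int.toNat_of_nonneg (by omega)
              have hmc : ((m : ℕ) : ℝ) = ((n : ℝ) + b) / 2 := by
                rw [show ((m : ℕ) : ℝ) = (((m : ℕ) : ℤ) : ℝ) by push_cast; ring, hmz]
                exact h
              have hm2 : 2 ≤ m := by omega
              have hmlt : m ≤ n - 1 := by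
                have hlt : ((m : ℕ) : ℝ) < ((n - 1 : ℕ) : ℝ) := by
                  rw [hmc, cast1]; linarith
                have := Nat.cast_lt (α := ℝ).mp hlt
                omega
              exact (h3 m hm2 hmlt).2.1 (by linarith [hmc.ge, hmc.le])
          set K : ℕ := (⌊((n : ℝ) + b) / 2⌋).toNat + 1 with hKdef
          have hKz : (((⌊((n : ℝ) + b) / 2⌋).toNat : ℕ) : ℤ) = ⌊((n : ℝ) + b) / 2⌋ :=
            Int.toNat_of_nonneg (by omega)
          have hKc : (K : ℝ) = (⌊((n : ℝ) + b) / 2⌋ : ℝ) + 1 := by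
            rw [hKdef, Nat.cast_add, Nat.cast_one,
              show (((⌊((n : ℝ) + b) / 2⌋).toNat : ℕ) : ℝ) =
                ((((⌊((n : ℝ) + b) / 2⌋).toNat : ℕ) : ℤ) : ℝ) from (Int.cast_natCast _).symm,
              hKz]
          have hKgt : ((n : ℝ) + b) / 2 < (K : ℝ) := by
            rw [hKc]; linarith [Int.lt_floor_add_one (((n : ℝ) + b) / 2)]
          have hKlt : (K : ℝ) < ((n : ℝ) + b) / 2 + 1 := by rw [hKc]; linarith
          have hK2 : 2 ≤ K := by omega
          have hKn2 : K ≤ n - 2 := by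
            have hlt : ((K : ℕ) : ℝ) < ((n - 1 : ℕ) : ℝ) := by rw [cast1]; linarith
            have := Nat.cast_lt (α := ℝ).mp hlt
            omega
          have hKn2r : (K : ℝ) ≤ (n : ℝ) - 2 := by
            have := Nat.cast_le (α := ℝ).mpr hKn2
            rwa [cast2] at this
          have EK := hck K hK2 (by omega)
          have h3K := (h3 K hK2 (by omega)).2.2
          have hd1 : 0 < (n : ℝ) + b + 2 - 2 * (K : ℝ) := by linarith
          have hd2 : (n : ℝ) + b - 2 * (K : ℝ) < 0 := by linarith
          have hsqK : 0 < ((n : ℝ) + b + 1 - 2 * (K : ℝ)) ^ 2 := sq_pos'' h3K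
          have hdenK : ((n : ℝ) + b + 2 - 2 * (K : ℝ)) * ((n : ℝ) + b - 2 * (K : ℝ)) *
              ((n : ℝ) + b + 1 - 2 * (K : ℝ)) ^ 2 < 0 :=
            mul_neg_of_neg_of_pos (mul_neg_of_pos_of_neg hd1 hd2) hsqK
          have hNumK := num_neg' EK hdenK
          -- E1 at n-1: denominator positive here (b < n-4)
          have hd1' : (n : ℝ) + b + 2 - 2 * ((n : ℝ) - 1) < 0 := by linarith
          have hd2' : (n : ℝ) + b - 2 * ((n : ℝ) - 1) < 0 := by linarith
          have hsq' : 0 < ((n : ℝ) + b + 1 - 2 * ((n : ℝ) - 1)) ^ 2 :=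
            sq_pos'' (by intro h; linarith [h.ge, h.le] :
              ((n : ℝ) + b + 1 - 2 * ((n : ℝ) - 1)) ≠ 0)
          have hden' : 0 < ((n : ℝ) + b + 2 - 2 * ((n : ℝ) - 1)) * ((n : ℝ) + b - 2 * ((n : ℝ) - 1)) *
              ((n : ℝ) + b + 1 - 2 * ((n : ℝ) - 1)) ^ 2 :=
            mul_pos (mul_pos_of_neg_of_neg hd1' hd2') hsq'
          have hNum1 := num_pos' E1 hden'
          have hP : (c + 1) * (b - c + 2 - (n : ℝ)) < 0 := by
            nlinarith [hNum1, show (0 : ℝ) < (n : ℝ) - 2 - b by linarith]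
          have hf1 : 0 < (n : ℝ) - (K : ℝ) := by linarith
          have hf3 : b + 1 - (K : ℝ) < 0 := by linarith
          rcases mul_neg_iff.mp hP with ⟨hcp, hbc⟩ | ⟨hcn, hbc⟩
          · -- c > -1, b - c < n - 2
            have hf2 : 0 < (n : ℝ) + c - (K : ℝ) := by linarith
            have hT : ((n : ℝ) - (K : ℝ)) * ((n : ℝ) + c - (K : ℝ)) * (b + 1 - (K : ℝ)) < 0 :=
              mul_neg_of_pos_of_neg (mul_pos hf1 hf2) hf3
            have hf4 : 0 < b - c + 1 - (K : ℝ) := by nlinarith [hNumK, hT]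
            linarith
          · -- c < -1, b - c > n - 2
            have hf4 : 0 < b - c + 1 - (K : ℝ) := by linarith
            have hf2 : 0 < (n : ℝ) + c - (K : ℝ) := by
              by_contra hcon
              push_neg at hcon
              have hnn : 0 ≤ (-((n : ℝ) + c - (K : ℝ))) * (-(b + 1 - (K : ℝ))) :=
                mul_nonneg (by linarith) (by linarith)
              nlinarith [hNumK, mul_pos hf1 hf4, hnn]
            linarith
        · -- b = n - 4 : excluded by h3 at k = n-2
          exfalso
          have h32 := (h3 (n - 2) (by omega) (by omega)).2.1
          rw [cast2] at h32
          exact h32 (by rw [hbE4]; ring)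
        · -- Case C-I : n - 4 < b < n - 2
          have hd1 : 0 < (n : ℝ) + b + 2 - 2 * ((n : ℝ) - 1) := by linarith
          have hd2 : (n : ℝ) + b - 2 * ((n : ℝ) - 1) < 0 := by linarith
          have hsq : 0 < ((n : ℝ) + b + 1 - 2 * ((n : ℝ) - 1)) ^ 2 := sq_pos'' h31.2.2
          have hden : ((n : ℝ) + b + 2 - 2 * ((n : ℝ) - 1)) * ((n : ℝ) + b - 2 * ((n : ℝ) - 1)) *
              ((n : ℝ) + b + 1 - 2 * ((n : ℝ) - 1)) ^ 2 < 0 :=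
            mul_neg_of_neg_of_pos (mul_neg_of_pos_of_neg hd1 hd2) hsq
          have hNum1 := num_neg' E1 hden
          have hP : 0 < (c + 1) * (b - c + 2 - (n : ℝ)) := by
            nlinarith [hNum1, show (0 : ℝ) < (n : ℝ) - 2 - b by linarith]
          rcases mul_pos_iff.mp hP with ⟨hcp, hbc⟩ | ⟨hcn, hbc⟩
          · exact Or.inr (Or.inr (Or.inr ⟨by linarith, by linarith, by linarith, hbC⟩))
          · -- c < -1, b - c < n - 2: contradiction via k = n-2
            exfalso
            have E2 := hck (n - 2) (by omega) (by omega)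
            rw [cast2] at E2
            have hd1' : 0 < (n : ℝ) + b + 2 - 2 * ((n : ℝ) - 2) := by linarith
            have hd2' : 0 < (n : ℝ) + b - 2 * ((n : ℝ) - 2) := by linarith
            have hsq' : 0 < ((n : ℝ) + b + 1 - 2 * ((n : ℝ) - 2)) ^ 2 :=
              sq_pos'' (by intro h; linarith [h.ge, h.le] :
                ((n : ℝ) + b + 1 - 2 * ((n : ℝ) - 2)) ≠ 0)
            have hden' : 0 < ((n : ℝ) + b + 2 - 2 * ((n : ℝ) - 2)) *
                ((n : ℝ) + b - 2 * ((n : ℝ) - 2)) * ((n : ℝ) + b + 1 - 2 * ((n : ℝ) - 2)) ^ 2 :=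
              mul_pos (mul_pos hd1' hd2') hsq'
            have hNum2 := num_pos' E2 hden'
            have hcc : 0 < c + 2 := by linarith
            have hdd : 0 < b - c + 3 - (n : ℝ) := by linarith
            have hbf : 0 < b + 3 - (n : ℝ) := by nlinarith [hNum2, mul_pos hcc hdd]
            linarith
      · -- b = n - 2 : excluded by h3 at k = n-1
        exact absurd (by rw [hbE]; ring) h31.2.1
      · -- Case B : b > n - 2
        have hd1 : 0 < (n : ℝ) + b + 2 - 2 * ((n : ℝ) - 1) := by linarith
        have hd2 : 0 < (n : ℝ) + b - 2 * ((n : ℝ) - 1) := by linarith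
        have hsq : 0 < ((n : ℝ) + b + 1 - 2 * ((n : ℝ) - 1)) ^ 2 :=
          sq_pos'' (by intro h; linarith [h.ge, h.le] :
            ((n : ℝ) + b + 1 - 2 * ((n : ℝ) - 1)) ≠ 0)
        have hden : 0 < ((n : ℝ) + b + 2 - 2 * ((n : ℝ) - 1)) * ((n : ℝ) + b - 2 * ((n : ℝ) - 1)) *
            ((n : ℝ) + b + 1 - 2 * ((n : ℝ) - 1)) ^ 2 :=
          mul_pos (mul_pos hd1 hd2) hsq
        have hNum1 := num_pos' E1 hden
        have hP : 0 < (c + 1) * (b - c + 2 - (n : ℝ)) := by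
          nlinarith [hNum1, show (0 : ℝ) < b + 2 - (n : ℝ) by linarith]
        rcases mul_pos_iff.mp hP with ⟨hcp, hbc⟩ | ⟨hcn, hbc⟩
        · exact Or.inr (Or.inr (Or.inl ⟨by linarith, hbB, by linarith⟩))
        · exfalso; linarith
  · -- Backward direction
    rintro (⟨hr1, hr2⟩ | ⟨hr1, hr2⟩ | ⟨hr1, hr2, hr3⟩ | ⟨hr1, hr2, hr3, hr4⟩)
    · -- R₁ : c + n - 2 < b < 2 - n
      constructor
      · apply div_pos_of_neg_of_neg
        · exact mul_neg_of_neg_of_pos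
            (mul_neg_of_pos_of_neg (by linarith) (by linarith)) (by linarith)
        · exact mul_neg_of_neg_of_pos (by linarith) (sq_pos'' h1)
      · intro k hk2 hk1
        have hKr : (k : ℝ) ≤ (n : ℝ) - 1 := by
          have := Nat.cast_le (α := ℝ).mpr hk1; rwa [cast1] at this
        have hK2 : (2 : ℝ) ≤ (k : ℝ) := by exact_mod_cast hk2
        have hsq := sq_pos'' (h3 k hk2 hk1).2.2
        apply div_pos
        · exact mul_pos (mul_pos_of_neg_of_neg
            (mul_neg_of_pos_of_neg (by linarith) (by linarith)) (by linarith)) (by linarith)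
        · exact mul_pos (mul_pos_of_neg_of_neg (by linarith) (by linarith)) hsq
    · -- R₂ : c > -1, b < 2 - n
      constructor
      · apply div_pos_of_neg_of_neg
        · exact mul_neg_of_pos_of_neg (mul_pos (by linarith) (by linarith)) (by linarith)
        · exact mul_neg_of_neg_of_pos (by linarith) (sq_pos'' h1)
      · intro k hk2 hk1
        have hKr : (k : ℝ) ≤ (n : ℝ) - 1 := by
          have := Nat.cast_le (α := ℝ).mpr hk1; rwa [cast1] at this
        have hK2 : (2 : ℝ) ≤ (k : ℝ) := by exact_mod_cast hk2
        have hsq := sq_pos'' (h3 k hk2 hk1).2.2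
        apply div_pos
        · exact mul_pos_of_neg_of_neg
            (mul_neg_of_pos_of_neg (mul_pos (by linarith) (by linarith)) (by linarith))
            (by linarith)
        · exact mul_pos (mul_pos_of_neg_of_neg (by linarith) (by linarith)) hsq
    · -- R₃ : c > -1, b > n - 2, b > c + n - 2
      constructor
      · apply div_pos
        · exact mul_pos (mul_pos (by linarith) (by linarith)) (by linarith)
        · exact mul_pos (by linarith) (sq_pos'' h1)
      · intro k hk2 hk1
        have hKr : (k : ℝ) ≤ (n : ℝ) - 1 := by
          have := Nat.cast_le (α := ℝ).mpr hk1; rwa [cast1] at this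
        have hK2 : (2 : ℝ) ≤ (k : ℝ) := by exact_mod_cast hk2
        have hsq := sq_pos'' (h3 k hk2 hk1).2.2
        apply div_pos
        · exact mul_pos (mul_pos (mul_pos (by linarith) (by linarith)) (by linarith))
            (by linarith)
        · exact mul_pos (mul_pos (by linarith) (by linarith)) hsq
    · -- R₄ : -1 < c < 0, c + n - 2 < b < n - 2
      constructor
      · apply div_pos
        · exact mul_pos (mul_pos (by linarith) (by linarith)) (by linarith)
        · exact mul_pos (by linarith) (sq_pos'' h1)
      · intro k hk2 hk1
        have hK2 : (2 : ℝ) ≤ (k : ℝ) := by exact_mod_cast hk2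
        have hsq := sq_pos'' (h3 k hk2 hk1).2.2
        have hsplit : k ≤ n - 2 ∨ k = n - 1 := by omega
        rcases hsplit with hkle | rfl
        · have hKr : (k : ℝ) ≤ (n : ℝ) - 2 := by
            have := Nat.cast_le (α := ℝ).mpr hkle; rwa [cast2] at this
          apply div_pos
          · exact mul_pos (mul_pos (mul_pos (by linarith) (by linarith)) (by linarith))
              (by linarith)
          · exact mul_pos (mul_pos (by linarith) (by linarith)) hsq
        · rw [cast1]
          rw [cast1] at hsq
          apply div_pos_of_neg_of_neg
          · exact mul_neg_of_neg_of_pos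
              (mul_neg_of_pos_of_neg (mul_pos (by linarith) (by linarith)) (by linarith))
              (by linarith)
          · exact mul_neg_of_neg_of_pos
              (mul_neg_of_pos_of_neg (by linarith) (by linarith)) hsq
end

section
/- Suppose b > n-2. Then all the quantities c_k = (n-k)(n+c-k)(b+1-k)(b-c+1-k)/((n+b+2-2k)(n+b-2k)(n+b+1-2k)²), for k = 2,...,n-1, are positive if and only if b > c+n-2 and c > -1. -/
theorem stmt_12 (n : ℕ) (hn : 4 ≤ n) (b c : ℝ) (hb : b > (n : ℝ) - 2) :
    (∀ k : ℕ, 2 ≤ k → k ≤ n - 1 →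
        0 < ((n : ℝ) - k) * (n + c - k) * (b + 1 - k) * (b - c + 1 - k) /
              ((n + b + 2 - 2 * k) * (n + b - 2 * k) * (n + b + 1 - 2 * k) ^ 2)) ↔
      (b > c + n - 2 ∧ c > -1) := by
  have hn' : (4:ℝ) ≤ (n:ℝ) := by exact_mod_cast hn
  constructor
  · intro h
    have hk := h (n-1) (by omega) le_rfl
    have hcast : ((n-1 : ℕ) : ℝ) = (n:ℝ) - 1 := by
      have h1 : (1:ℕ) ≤ n := by omega
      push_cast [Nat.cast_sub h1]; ring
    rw [hcast] at hk
    have hd : 0 < ((n:ℝ) + b + 2 - 2*((n:ℝ)-1)) * ((n:ℝ) + b - 2*((n:ℝ)-1)) *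
        ((n:ℝ) + b + 1 - 2*((n:ℝ)-1))^2 := by
      have h1 : 0 < (n:ℝ) + b + 2 - 2*((n:ℝ)-1) := by linarith
      have h2 : 0 < (n:ℝ) + b - 2*((n:ℝ)-1) := by linarith
      have h3 : 0 < ((n:ℝ) + b + 1 - 2*((n:ℝ)-1))^2 := by nlinarith
      positivity
    have hnum : 0 < ((n:ℝ) - ((n:ℝ)-1)) * ((n:ℝ) + c - ((n:ℝ)-1)) * (b + 1 - ((n:ℝ)-1)) *
        (b - c + 1 - ((n:ℝ)-1)) := (div_pos_iff.mp hk).elim (fun ⟨a, _⟩ => a)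
        (fun ⟨_, hbneg⟩ => absurd hd (not_lt.mpr hbneg.le))
    have key : 0 < (c + 1) * (b - c - (n:ℝ) + 2) := by nlinarith
    have hc : c > -1 := by nlinarith
    exact ⟨by nlinarith, hc⟩
  · rintro ⟨h1, h2⟩ k hk2 hkn
    have hkr : (k:ℝ) ≤ (n:ℝ) - 1 := by
      have : (k:ℕ) + 1 ≤ n := by omega
      have := (Nat.cast_le (α := ℝ)).mpr this
      push_cast at this; linarith
    have f1 : 0 < (n:ℝ) - k := by linarith
    have f2 : 0 < (n:ℝ) + c - k := by linarith
    have f3 : 0 < b + 1 - k := by linarith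
    have f4 : 0 < b - c + 1 - k := by linarith
    have g1 : 0 < (n:ℝ) + b + 2 - 2*k := by linarith
    have g2 : 0 < (n:ℝ) + b - 2*k := by linarith
    have g3 : 0 < ((n:ℝ) + b + 1 - 2*k)^2 := by nlinarith
    apply div_pos (by positivity) (by positivity)
end

section
/- Suppose b < 2-n. Then all the quantities c_k = (n-k)(n+c-k)(b+1-k)(b-c+1-k)/((n+b+2-2k)(n+b-2k)(n+b+1-2k)²), for k = 2,...,n-1, are positive if and only if either (b > c+n-2 and c < 2-n) or (b < c+1 and c > -1). -/
lemma prod4_aux {A B C D : ℝ} (hA : 0 < A) (hC : C < 0) (h : 0 < A * B * C * D) :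
    B * D < 0 := by
  by_contra hbd
  push_neg at hbd
  have h1 : A * C < 0 := mul_neg_of_pos_of_neg hA hC
  nlinarith [mul_nonpos_of_nonpos_of_nonneg h1.le hbd]

theorem stmt_13 (n : ℕ) (hn : 4 ≤ n) (b c : ℝ) (hb : b < 2 - (n : ℝ)) :
    (∀ k : ℕ, 2 ≤ k → k ≤ n - 1 →
        0 < ((n : ℝ) - k) * (n + c - k) * (b + 1 - k) * (b - c + 1 - k) /
              ((n + b + 2 - 2 * k) * (n + b - 2 * k) * (n + b + 1 - 2 * k) ^ 2)) ↔
      ((b > c + n - 2 ∧ c < 2 - (n : ℝ)) ∨ (b < c + 1 ∧ c > -1)) := by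
  have hN : (4 : ℝ) ≤ (n : ℝ) := by exact_mod_cast hn
  constructor
  · intro h
    have h2 := h 2 le_rfl (by omega)
    have h1 := h (n - 1) (by omega) le_rfl
    have hcast : ((n - 1 : ℕ) : ℝ) = (n : ℝ) - 1 := by
      have h1n : (1 : ℕ) ≤ n := by omega
      push_cast [h1n]
      ring
    rw [hcast] at h1
    push_cast at h2
    -- denominator at k = 2 is positive
    have hd2 : 0 < ((n : ℝ) + b + 2 - 2 * 2) * ((n : ℝ) + b - 2 * 2) *
        ((n : ℝ) + b + 1 - 2 * 2) ^ 2 := by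
      have e1 : (n : ℝ) + b + 2 - 2 * 2 < 0 := by linarith
      have e2 : (n : ℝ) + b - 2 * 2 < 0 := by linarith
      have e3 : (n : ℝ) + b + 1 - 2 * 2 < 0 := by linarith
      have e4 : 0 < ((n : ℝ) + b + 1 - 2 * 2) ^ 2 := by nlinarith
      exact mul_pos (mul_pos_of_neg_of_neg e1 e2) e4
    have hd1 : 0 < ((n : ℝ) + b + 2 - 2 * ((n : ℝ) - 1)) * ((n : ℝ) + b - 2 * ((n : ℝ) - 1)) *
        ((n : ℝ) + b + 1 - 2 * ((n : ℝ) - 1)) ^ 2 := by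
      have e1 : (n : ℝ) + b + 2 - 2 * ((n : ℝ) - 1) < 0 := by linarith
      have e2 : (n : ℝ) + b - 2 * ((n : ℝ) - 1) < 0 := by linarith
      have e3 : (n : ℝ) + b + 1 - 2 * ((n : ℝ) - 1) < 0 := by linarith
      have e4 : 0 < ((n : ℝ) + b + 1 - 2 * ((n : ℝ) - 1)) ^ 2 := by nlinarith
      exact mul_pos (mul_pos_of_neg_of_neg e1 e2) e4
    -- extract numerators
    have hnum2 : 0 < ((n : ℝ) - 2) * ((n : ℝ) + c - 2) * (b + 1 - 2) * (b - c + 1 - 2) := by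
      rcases div_pos_iff.mp h2 with ⟨hp, _⟩ | ⟨_, hq⟩
      · exact hp
      · linarith
    have hnum1 : 0 < ((n : ℝ) - ((n : ℝ) - 1)) * ((n : ℝ) + c - ((n : ℝ) - 1)) *
        (b + 1 - ((n : ℝ) - 1)) * (b - c + 1 - ((n : ℝ) - 1)) := by
      rcases div_pos_iff.mp h1 with ⟨hp, _⟩ | ⟨_, hq⟩
      · exact hp
      · linarith
    have P2 : ((n : ℝ) + c - 2) * (b - c + 1 - 2) < 0 :=
      prod4_aux (by linarith) (by linarith) hnum2
    have P1 : ((n : ℝ) + c - ((n : ℝ) - 1)) * (b - c + 1 - ((n : ℝ) - 1)) < 0 :=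
      prod4_aux (by linarith) (by linarith) hnum1
    rcases mul_neg_iff.mp P2 with ⟨p2a, p2b⟩ | ⟨p2a, p2b⟩ <;>
      rcases mul_neg_iff.mp P1 with ⟨p1a, p1b⟩ | ⟨p1a, p1b⟩
    · exact Or.inr ⟨by linarith, by linarith⟩
    · exfalso; linarith
    · exfalso; linarith
    · exact Or.inl ⟨by linarith, by linarith⟩
  · intro h k hk2 hk1
    have hk2' : (2 : ℝ) ≤ (k : ℝ) := by exact_mod_cast hk2
    have hk1' : (k : ℝ) ≤ (n : ℝ) - 1 := by
      have hkn : k + 1 ≤ n := by omega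
      have : ((k : ℝ) + 1) ≤ (n : ℝ) := by exact_mod_cast hkn
      linarith
    have hden : 0 < ((n : ℝ) + b + 2 - 2 * k) * ((n : ℝ) + b - 2 * k) *
        ((n : ℝ) + b + 1 - 2 * k) ^ 2 := by
      have e1 : (n : ℝ) + b + 2 - 2 * k < 0 := by linarith
      have e2 : (n : ℝ) + b - 2 * k < 0 := by linarith
      have e3 : (n : ℝ) + b + 1 - 2 * k < 0 := by linarith
      have e4 : 0 < ((n : ℝ) + b + 1 - 2 * k) ^ 2 := by nlinarith
      exact mul_pos (mul_pos_of_neg_of_neg e1 e2) e4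
    apply div_pos _ hden
    have f1 : 0 < (n : ℝ) - k := by linarith
    have f3 : b + 1 - (k : ℝ) < 0 := by linarith
    rcases h with ⟨hbc, hc⟩ | ⟨hbc, hc⟩
    · have f2 : (n : ℝ) + c - k < 0 := by linarith
      have f4 : 0 < b - c + 1 - (k : ℝ) := by linarith
      exact mul_pos (mul_pos_of_neg_of_neg (mul_neg_of_pos_of_neg f1 f2) f3) f4
    · have f2 : 0 < (n : ℝ) + c - k := by linarith
      have f4 : b - c + 1 - (k : ℝ) < 0 := by linarith
      exact mul_pos_of_neg_of_neg (mul_neg_of_pos_of_neg (mul_pos f1 f2) f3) f4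
end
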